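/- For all natural numbers n: (1 + x·d/dx)^n applied to e^x equals p(x)·e^x where p(x) = Σ_{i=0}^{n} S(n+1, i+1)·x^i, with S the Stirling numbers of the second kind. -/

import Mathlib

open Finset

/-- Stirling numbers of the second kind: `stirling2 n k` is the number of partitions of an
`n`-element set into `k` nonempty blocks. -/
def stirling2 : ℕ → ℕ → ℕ
  | 0, 0 => 1
  | 0, _ + 1 => 0
  | _ + 1, 0 => 0
  | n + 1, k + 1 => (k + 1) * stirling2 n (k + 1) + stirling2 n k

/-- Unsigned Stirling numbers of the first kind: `stirling1 n k` counts permutations of `n`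
elements with exactly `k` disjoint cycles. -/
def stirling1 : ℕ → ℕ → ℕ
  | 0, 0 => 1
  | 0, _ + 1 => 0
  | _ + 1, 0 => 0
  | n + 1, k + 1 => n * stirling1 n (k + 1) + stirling1 n k

/-- The `j`-th elementary symmetric polynomial in `d` variables, evaluated at `a`. -/
def esymm (d j : ℕ) (a : Fin d → ℝ) : ℝ :=
  ∑ s ∈ Finset.powersetCard j (Finset.univ : Finset (Fin d)), ∏ i ∈ s, a i

/-- The operator `x·d/dx` acting on functions. -/
noncomputable def thetaOp (f : ℝ → ℝ) : ℝ → ℝ := fun x => x * deriv f x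

/-- The operator `1 + a·x·d/dx` acting on functions. -/
noncomputable def eulerOp (a : ℝ) (f : ℝ → ℝ) : ℝ → ℝ := fun x => f x + a * x * deriv f x

/-- The composite operator `∏_{i=1}^d (1 + aᵢ·x·d/dx)`. -/
noncomputable def opProd (d : ℕ) (a : Fin d → ℝ) : (ℝ → ℝ) → ℝ → ℝ :=
  (List.ofFn fun i : Fin d => eulerOp (a i)).foldr (· ∘ ·) id

/-!
The operator `1 + x·d/dx` sends `p(x)·eˣ` to `(p + X·(p' + p))(x)·eˣ`, so the iterates of
`eˣ` are polynomials times `eˣ`. On coefficients the map `p ↦ p + X·(p' + p)` is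
`cᵢ ↦ (i + 1)·cᵢ + cᵢ₋₁`, which is exactly the recurrence
`S(n+2, i+1) = (i+1)·S(n+1, i+1) + S(n+1, i)`.
-/

open Polynomial

theorem stirling2_eq_stirlingSecond : ∀ n k : ℕ, stirling2 n k = Nat.stirlingSecond n k
  | 0, 0 => rfl
  | 0, _ + 1 => rfl
  | _ + 1, 0 => rfl
  | n + 1, k + 1 => by
    rw [stirling2, Nat.stirlingSecond_succ_succ, stirling2_eq_stirlingSecond n (k + 1),
      stirling2_eq_stirlingSecond n k]

theorem eulerOp_eval_mul_exp (a : ℝ) (p : ℝ[X]) :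
    eulerOp a (fun x => p.eval x * Real.exp x) =
      fun x => (p + C a * X * (derivative p + p)).eval x * Real.exp x := by
  funext x
  rw [eulerOp, ((p.hasDerivAt x).fun_mul (Real.hasDerivAt_exp x)).deriv]
  simp only [eval_add, eval_mul, eval_C, eval_X]
  ring

noncomputable def stirlingPoly (n : ℕ) : ℝ[X] :=
  ∑ i ∈ range (n + 1), monomial i (Nat.stirlingSecond (n + 1) (i + 1) : ℝ)

theorem coeff_stirlingPoly (n i : ℕ) :
    (stirlingPoly n).coeff i = Nat.stirlingSecond (n + 1) (i + 1) := by
  rw [stirlingPoly, finsetSum_coeff]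
  simp only [coeff_monomial, sum_ite_eq', mem_range]
  split_ifs
  · rfl
  · rw [Nat.stirlingSecond_eq_zero_of_lt (by omega), Nat.cast_zero]

theorem stirlingPoly_succ (n : ℕ) :
    stirlingPoly (n + 1) =
      stirlingPoly n + X * (derivative (stirlingPoly n) + stirlingPoly n) := by
  ext (_ | i)
  · simp [coeff_stirlingPoly, Nat.stirlingSecond_one_right]
  · simp only [coeff_add, coeff_X_mul, coeff_derivative, coeff_stirlingPoly,
      Nat.stirlingSecond_succ_succ (n + 1) (i + 1)]
    push_cast
    ring

theorem eval_stirlingPoly (n : ℕ) (x : ℝ) :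
    (stirlingPoly n).eval x =
      ∑ i ∈ range (n + 1), (Nat.stirlingSecond (n + 1) (i + 1) : ℝ) * x ^ i := by
  simp only [stirlingPoly, eval_finsetSum, eval_monomial]

theorem eulerOp_one_iterate_exp_eq_stirlingPoly (n : ℕ) :
    (eulerOp 1)^[n] Real.exp = fun x => (stirlingPoly n).eval x * Real.exp x := by
  induction n with
  | zero => funext x; simp [eval_stirlingPoly, Nat.stirlingSecond_one_right]
  | succ n ih =>
    rw [Function.iterate_succ_apply', ih, eulerOp_eval_mul_exp, C_1, one_mul, stirlingPoly_succ]

theorem eulerOp_one_iterate_exp (n : ℕ) :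
    (eulerOp 1)^[n] Real.exp =
      fun x => (∑ i ∈ Finset.range (n + 1), (stirling2 (n + 1) (i + 1) : ℝ) * x ^ i) *
        Real.exp x := by
  simp only [eulerOp_one_iterate_exp_eq_stirlingPoly, eval_stirlingPoly,
    stirling2_eq_stirlingSecond]
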